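/- arXiv:2511.03390 — 2 statements merged into one kernel-verified Lean document; each statement's English description precedes it below -/
import Mathlib

section
/- With notation as in the feedback-increment setup, if X and X+Z are symmetric and both R(X) and R(X+Z) are invertible, then the Riccati operator satisfies the exact second-order expansion: G(X+Z) = G(X) + (A_0 + B_0 F(X))^T Z + Z (A_0 + B_0 F(X)) + Σ_{k=1}^r (A_k + B_k F(X))^T Z (A_k + B_k F(X)) - N(X,Z)^T R(X+Z)^{-1} N(X,Z), where N(X,Z) = B_0^T Z + Σ_{k=1}^r B_k^T Z (A_k + B_k F(X)). -/
open Matrix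

noncomputable def RX {n m r : ℕ} (R : Matrix (Fin m) (Fin m) ℝ)
    (B : Fin r → Matrix (Fin n) (Fin m) ℝ) (X : Matrix (Fin n) (Fin n) ℝ) :
    Matrix (Fin m) (Fin m) ℝ :=
  R + ∑ k, (B k)ᵀ * X * B k

noncomputable def SX {n m r : ℕ} (A : Fin r → Matrix (Fin n) (Fin n) ℝ)
    (B0 : Matrix (Fin n) (Fin m) ℝ) (B : Fin r → Matrix (Fin n) (Fin m) ℝ)
    (L : Matrix (Fin n) (Fin m) ℝ) (X : Matrix (Fin n) (Fin n) ℝ) :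
    Matrix (Fin m) (Fin n) ℝ :=
  B0ᵀ * X + ∑ k, (B k)ᵀ * X * A k + Lᵀ

noncomputable def FX {n m r : ℕ} (A : Fin r → Matrix (Fin n) (Fin n) ℝ)
    (B0 : Matrix (Fin n) (Fin m) ℝ) (B : Fin r → Matrix (Fin n) (Fin m) ℝ)
    (L : Matrix (Fin n) (Fin m) ℝ) (R : Matrix (Fin m) (Fin m) ℝ)
    (X : Matrix (Fin n) (Fin n) ℝ) : Matrix (Fin m) (Fin n) ℝ :=
  -((RX R B X)⁻¹ * SX A B0 B L X)

noncomputable def NXZ {n m r : ℕ} (A : Fin r → Matrix (Fin n) (Fin n) ℝ)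
    (B0 : Matrix (Fin n) (Fin m) ℝ) (B : Fin r → Matrix (Fin n) (Fin m) ℝ)
    (L : Matrix (Fin n) (Fin m) ℝ) (R : Matrix (Fin m) (Fin m) ℝ)
    (X Z : Matrix (Fin n) (Fin n) ℝ) : Matrix (Fin m) (Fin n) ℝ :=
  B0ᵀ * Z + ∑ k, (B k)ᵀ * Z * (A k + B k * FX A B0 B L R X)

/-- Feedback-increment identity: `F(X+Z) = F(X) - R(X+Z)⁻¹ N(X,Z)`. -/

noncomputable def GX {n m r : ℕ} (A0 : Matrix (Fin n) (Fin n) ℝ)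
    (A : Fin r → Matrix (Fin n) (Fin n) ℝ)
    (B0 : Matrix (Fin n) (Fin m) ℝ) (B : Fin r → Matrix (Fin n) (Fin m) ℝ)
    (L : Matrix (Fin n) (Fin m) ℝ) (M : Matrix (Fin n) (Fin n) ℝ)
    (R : Matrix (Fin m) (Fin m) ℝ) (X : Matrix (Fin n) (Fin n) ℝ) :
    Matrix (Fin n) (Fin n) ℝ :=
  A0ᵀ * X + X * A0 + ∑ k, (A k)ᵀ * X * A k + M
    - (SX A B0 B L X)ᵀ * (RX R B X)⁻¹ * SX A B0 B L X

lemma key_quad {m n : ℕ} (S1 S2 F : Matrix (Fin m) (Fin n) ℝ)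
    (R1 R2 : Matrix (Fin m) (Fin m) ℝ)
    (hR1 : R1ᵀ = R1) (hR2 : R2ᵀ = R2) (hd1 : IsUnit R1.det) (hd2 : IsUnit R2.det)
    (hF : R1 * F = -S1) :
    (S2 + R2 * F)ᵀ * R2⁻¹ * (S2 + R2 * F) =
      Fᵀ * (S2 - S1) + (S2 - S1)ᵀ * F + Fᵀ * (R2 - R1) * F
        - (S1ᵀ * R1⁻¹ * S1 - S2ᵀ * R2⁻¹ * S2) := by
  have hS1 : S1 = -(R1 * F) := by rw [hF, neg_neg]
  have hc2 : R2 * R2⁻¹ = 1 := Matrix.mul_nonsing_inv _ hd2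
  have hc2' : R2⁻¹ * R2 = 1 := Matrix.nonsing_inv_mul _ hd2
  have e1 : S1ᵀ * R1⁻¹ * S1 = Fᵀ * R1 * F := by
    rw [hS1]
    simp only [Matrix.transpose_neg, Matrix.transpose_mul, hR1, Matrix.neg_mul,
      Matrix.mul_neg, neg_neg, Matrix.mul_assoc, Matrix.nonsing_inv_mul_cancel_left _ _ hd1, Matrix.mul_nonsing_inv_cancel_left _ _ hd1]
  rw [e1, hS1]
  simp only [sub_neg_eq_add, Matrix.transpose_sub, Matrix.transpose_add, Matrix.transpose_mul, hR1, hR2, Matrix.add_mul,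
    Matrix.mul_add, Matrix.mul_sub, Matrix.sub_mul, Matrix.transpose_neg, Matrix.neg_mul,
    Matrix.mul_neg, neg_neg, Matrix.mul_assoc,
    Matrix.nonsing_inv_mul_cancel_left _ _ hd2, Matrix.mul_nonsing_inv_cancel_left _ _ hd2]
  abel

set_option maxHeartbeats 1600000 in
/-- Exact second-order expansion of the Riccati operator `G` at `X` in direction `Z`. -/
theorem stmt_2 {n m r : ℕ}
    (A0 : Matrix (Fin n) (Fin n) ℝ) (A : Fin r → Matrix (Fin n) (Fin n) ℝ)
    (B0 : Matrix (Fin n) (Fin m) ℝ) (B : Fin r → Matrix (Fin n) (Fin m) ℝ)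
    (L : Matrix (Fin n) (Fin m) ℝ) (M : Matrix (Fin n) (Fin n) ℝ)
    (R : Matrix (Fin m) (Fin m) ℝ) (X Z : Matrix (Fin n) (Fin n) ℝ)
    (hM : M.IsSymm) (hR : R.IsSymm) (hX : X.IsSymm) (hXZ : (X + Z).IsSymm)
    (h1 : IsUnit (RX R B X).det) (h2 : IsUnit (RX R B (X + Z)).det) :
    GX A0 A B0 B L M R (X + Z) =
      GX A0 A B0 B L M R X
        + (A0 + B0 * FX A B0 B L R X)ᵀ * Z + Z * (A0 + B0 * FX A B0 B L R X)
        + ∑ k, (A k + B k * FX A B0 B L R X)ᵀ * Z * (A k + B k * FX A B0 B L R X)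
        - (NXZ A B0 B L R X Z)ᵀ * (RX R B (X + Z))⁻¹ * NXZ A B0 B L R X Z := by
  have hX' : Xᵀ = X := hX
  have hR' : Rᵀ = R := hR
  have hXZ' : (X + Z)ᵀ = X + Z := hXZ
  have hZ : Zᵀ = Z := by
    have := hXZ'
    rw [Matrix.transpose_add, hX'] at this
    exact add_left_cancel this
  have hsym1 : (RX R B X)ᵀ = RX R B X := by
    simp [RX, Matrix.transpose_add, Matrix.transpose_sum, Matrix.transpose_mul,
      Matrix.transpose_transpose, hR', hX', Matrix.mul_assoc]
  have hsym2 : (RX R B (X + Z))ᵀ = RX R B (X + Z) := by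
    simp [RX, Matrix.transpose_add, Matrix.transpose_sum, Matrix.transpose_mul,
      Matrix.transpose_transpose, hR', hXZ', Matrix.mul_assoc]
  have hR1F : RX R B X * FX A B0 B L R X = -(SX A B0 B L X) := by
    rw [FX, Matrix.mul_neg, Matrix.mul_nonsing_inv_cancel_left _ _ h1]
  have hR2eq : RX R B (X + Z) = RX R B X + ∑ k, (B k)ᵀ * Z * B k := by
    simp only [RX, Matrix.mul_add, Matrix.add_mul, Finset.sum_add_distrib]
    abel
  have hS2eq : SX A B0 B L (X + Z) =
      SX A B0 B L X + (B0ᵀ * Z + ∑ k, (B k)ᵀ * Z * A k) := by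
    simp only [SX, Matrix.mul_add, Matrix.add_mul, Finset.sum_add_distrib]
    abel
  have hN : NXZ A B0 B L R X Z =
      SX A B0 B L (X + Z) + RX R B (X + Z) * FX A B0 B L R X := by
    rw [hS2eq, hR2eq, Matrix.add_mul, hR1F]
    simp only [NXZ, Matrix.mul_add, Finset.sum_add_distrib, Matrix.sum_mul, Matrix.mul_assoc]
    abel
  have hkey := key_quad (SX A B0 B L X) (SX A B0 B L (X + Z)) (FX A B0 B L R X)
    (RX R B X) (RX R B (X + Z)) hsym1 hsym2 h1 h2 hR1F
  rw [hN, hkey]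
  simp only [GX, hS2eq, hR2eq, Matrix.transpose_add, Matrix.transpose_sub,
    Matrix.transpose_mul, Matrix.transpose_sum, Matrix.transpose_transpose,
    hZ, hX', Matrix.mul_add, Matrix.add_mul, Matrix.mul_sub, Matrix.sub_mul,
    Finset.sum_add_distrib, Matrix.sum_mul, Matrix.mul_sum, Matrix.mul_assoc]
  abel
end

section
/- Let X, Y be symmetric n×n matrices with X ⪯ Y. Let R22 ∈ S^{m2}, R11 ∈ S^{m1}, R12 ∈ R^{m1×m2} and B_{k1} ∈ R^{n×m1}, B_{k2} ∈ R^{n×m2} (k=1,...,r). Define R_{ij}(Z) := R_{ij} + Σ_k B_{ki}^T Z B_{kj} and R22^♯(Z) := R11(Z) - R12(Z) R22(Z)^{-1} R12(Z)^T. If R22(X) ≻ 0, R22(Y) ≻ 0, and R22^♯(Y) ≺ 0, then R22^♯(X) ⪯ R22^♯(Y) ≺ 0. (Monotonicity of the Schur complement sign condition: the Schur complement map Z ↦ R22^♯(Z) is matrix-monotone nondecreasing on {Z : R22(Z) ≻ 0}.) -/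
/-!
Write `M(Z)` for the block matrix `[[R11(Z), R12(Z)], [R12(Z)ᵀ, R22(Z)]]`; then
`M(Y) - M(X) = ∑ₖ Bₖᵀ (Y - X) Bₖ` with `Bₖ = [B_{k1} B_{k2}]`, which is positive semidefinite.
Since the Schur complement of `R22(X)` in `M(X) - diag(R22♯(X), 0)` vanishes, that matrix is
positive semidefinite, and adding `M(Y) - M(X)` keeps it so. Its Schur complement with respect to
`R22(Y)` is `R22♯(Y) - R22♯(X)`, which is therefore positive semidefinite as well.
-/

open Matrix

namespace Matrix

theorem fromBlocks_sum {ι l m n o α : Type*} [AddCommMonoid α] (s : Finset ι)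
    (A : ι → Matrix n l α) (B : ι → Matrix n m α) (C : ι → Matrix o l α)
    (D : ι → Matrix o m α) :
    fromBlocks (∑ k ∈ s, A k) (∑ k ∈ s, B k) (∑ k ∈ s, C k) (∑ k ∈ s, D k)
      = ∑ k ∈ s, fromBlocks (A k) (B k) (C k) (D k) := by
  ext (i | i) (j | j) <;> simp [sum_apply]

theorem add_sum_mul_mul_sub_add_sum_mul_mul {ι l m n α : Type*} [Fintype n] [Ring α]
    (s : Finset ι) (R : Matrix l m α) (A : ι → Matrix l n α) (B : ι → Matrix n m α)
    (X Y : Matrix n n α) :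
    (R + ∑ k ∈ s, A k * Y * B k) - (R + ∑ k ∈ s, A k * X * B k)
      = ∑ k ∈ s, A k * (Y - X) * B k := by
  simp only [add_sub_add_left_eq_sub, ← Finset.sum_sub_distrib, Matrix.mul_sub, Matrix.sub_mul]

theorem PosSemidef.fromBlocks_sum_conjTranspose_mul_mul {ι n m₁ m₂ R : Type*} [Fintype n]
    [Finite m₁] [Finite m₂] [CommRing R] [PartialOrder R] [StarRing R] [StarOrderedRing R]
    {Z : Matrix n n R}
    (hZ : Z.PosSemidef) (s : Finset ι) (B₁ : ι → Matrix n m₁ R) (B₂ : ι → Matrix n m₂ R) :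
    (fromBlocks (∑ k ∈ s, (B₁ k)ᴴ * Z * B₁ k) (∑ k ∈ s, (B₁ k)ᴴ * Z * B₂ k)
      (∑ k ∈ s, (B₁ k)ᴴ * Z * B₂ k)ᴴ (∑ k ∈ s, (B₂ k)ᴴ * Z * B₂ k)).PosSemidef := by
  have hblock (k : ι) : (fromCols (B₁ k) (B₂ k))ᴴ * Z * fromCols (B₁ k) (B₂ k)
      = fromBlocks ((B₁ k)ᴴ * Z * B₁ k) ((B₁ k)ᴴ * Z * B₂ k)
          ((B₁ k)ᴴ * Z * B₂ k)ᴴ ((B₂ k)ᴴ * Z * B₂ k) := by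
    rw [conjTranspose_fromCols_eq_fromRows_conjTranspose, fromRows_mul, fromRows_mul_fromCols,
      conjTranspose_mul, conjTranspose_mul, conjTranspose_conjTranspose, hZ.isHermitian.eq]
    simp only [Matrix.mul_assoc]
  rw [conjTranspose_sum, fromBlocks_sum]
  simp only [← hblock]
  exact posSemidef_sum s fun k _ => hZ.conjTranspose_mul_mul_same _

section SchurComplement

variable {m n K : Type*} [Finite m] [Fintype n] [DecidableEq n]
  [Field K] [PartialOrder K] [StarRing K] [StarOrderedRing K]

theorem PosDef.posSemidef_fromBlocks_schur {D : Matrix n n K} (hD : D.PosDef)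
    (B : Matrix m n K) : (fromBlocks (B * D⁻¹ * Bᴴ) B Bᴴ D).PosSemidef := by
  have := hD.isUnit.invertible
  rw [PosDef.fromBlocks₂₂ _ _ hD, sub_self]
  exact .zero

theorem posSemidef_schur_sub_schur {A A' : Matrix m m K} {B B' : Matrix m n K}
    {D D' : Matrix n n K} (hD : D.PosDef) (hD' : D'.PosDef)
    (h : (fromBlocks (A' - A) (B' - B) (B' - B)ᴴ (D' - D)).PosSemidef) :
    (A' - B' * D'⁻¹ * B'ᴴ - (A - B * D⁻¹ * Bᴴ)).PosSemidef := by
  have := hD'.isUnit.invertible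
  have hsum := (hD.posSemidef_fromBlocks_schur B).add h
  rw [fromBlocks_add, conjTranspose_sub, add_sub_cancel, add_sub_cancel, add_sub_cancel,
    PosDef.fromBlocks₂₂ _ _ hD'] at hsum
  rwa [show A' - B' * D'⁻¹ * B'ᴴ - (A - B * D⁻¹ * Bᴴ)
    = B * D⁻¹ * Bᴴ + (A' - A) - B' * D'⁻¹ * B'ᴴ by abel]

end SchurComplement

end Matrix

theorem stmt_9_general {n m1 m2 r : ℕ}
    (R11 : Matrix (Fin m1) (Fin m1) ℝ) (R12 : Matrix (Fin m1) (Fin m2) ℝ)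
    (R22 : Matrix (Fin m2) (Fin m2) ℝ)
    (B1 : Fin r → Matrix (Fin n) (Fin m1) ℝ) (B2 : Fin r → Matrix (Fin n) (Fin m2) ℝ)
    (X Y : Matrix (Fin n) (Fin n) ℝ)
    (hXY : (Y - X).PosSemidef) :
    let R11f : Matrix (Fin n) (Fin n) ℝ → Matrix (Fin m1) (Fin m1) ℝ :=
      fun Z => R11 + ∑ k, (B1 k)ᵀ * Z * B1 k
    let R12f : Matrix (Fin n) (Fin n) ℝ → Matrix (Fin m1) (Fin m2) ℝ :=
      fun Z => R12 + ∑ k, (B1 k)ᵀ * Z * B2 k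
    let R22f : Matrix (Fin n) (Fin n) ℝ → Matrix (Fin m2) (Fin m2) ℝ :=
      fun Z => R22 + ∑ k, (B2 k)ᵀ * Z * B2 k
    let Rsharp : Matrix (Fin n) (Fin n) ℝ → Matrix (Fin m1) (Fin m1) ℝ :=
      fun Z => R11f Z - R12f Z * (R22f Z)⁻¹ * (R12f Z)ᵀ
    (R22f X).PosDef → (R22f Y).PosDef → (-(Rsharp Y)).PosDef →
      (Rsharp Y - Rsharp X).PosSemidef ∧ (-(Rsharp X)).PosDef := by
  intro R11f R12f R22f Rsharp hRX hRY hRsY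
  have hblocks : (fromBlocks (R11f Y - R11f X) (R12f Y - R12f X) (R12f Y - R12f X)ᴴ
      (R22f Y - R22f X)).PosSemidef := by
    simpa only [R11f, R12f, R22f, add_sum_mul_mul_sub_add_sum_mul_mul,
      conjTranspose_eq_transpose_of_trivial]
      using hXY.fromBlocks_sum_conjTranspose_mul_mul Finset.univ B1 B2
  have hmono : (Rsharp Y - Rsharp X).PosSemidef := by
    simpa only [Rsharp, conjTranspose_eq_transpose_of_trivial]
      using posSemidef_schur_sub_schur hRX hRY hblocks
  refine ⟨hmono, ?_⟩
  convert hRsY.add_posSemidef hmono using 1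
  abel

/-- Monotonicity of the Schur complement: if `X ⪯ Y`, `R22(X) ≻ 0`, `R22(Y) ≻ 0` and
`R22♯(Y) ≺ 0`, then `R22♯(X) ⪯ R22♯(Y) ≺ 0`. -/
theorem stmt_9 {n m1 m2 r : ℕ}
    (R11 : Matrix (Fin m1) (Fin m1) ℝ) (R12 : Matrix (Fin m1) (Fin m2) ℝ)
    (R22 : Matrix (Fin m2) (Fin m2) ℝ) (hR11 : R11.IsSymm) (hR22 : R22.IsSymm)
    (B1 : Fin r → Matrix (Fin n) (Fin m1) ℝ) (B2 : Fin r → Matrix (Fin n) (Fin m2) ℝ)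
    (X Y : Matrix (Fin n) (Fin n) ℝ) (hX : X.IsSymm) (hY : Y.IsSymm)
    (hXY : (Y - X).PosSemidef) :
    let R11f : Matrix (Fin n) (Fin n) ℝ → Matrix (Fin m1) (Fin m1) ℝ :=
      fun Z => R11 + ∑ k, (B1 k)ᵀ * Z * B1 k
    let R12f : Matrix (Fin n) (Fin n) ℝ → Matrix (Fin m1) (Fin m2) ℝ :=
      fun Z => R12 + ∑ k, (B1 k)ᵀ * Z * B2 k
    let R22f : Matrix (Fin n) (Fin n) ℝ → Matrix (Fin m2) (Fin m2) ℝ :=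
      fun Z => R22 + ∑ k, (B2 k)ᵀ * Z * B2 k
    let Rsharp : Matrix (Fin n) (Fin n) ℝ → Matrix (Fin m1) (Fin m1) ℝ :=
      fun Z => R11f Z - R12f Z * (R22f Z)⁻¹ * (R12f Z)ᵀ
    (R22f X).PosDef → (R22f Y).PosDef → (-(Rsharp Y)).PosDef →
      (Rsharp Y - Rsharp X).PosSemidef ∧ (-(Rsharp X)).PosDef :=
  stmt_9_general R11 R12 R22 B1 B2 X Y hXY
end
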